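/- arXiv:2302.02154 — 7 statements merged into one kernel-verified Lean document; each statement's English description precedes it below -/
import Mathlib

section
/- For every transaction deducibility function Λ and every set of transactions T: if T ⊆ Λ_A(∅) for some finite set of actors A, then the family {B ⊆ 𝔸 : T ⊆ Λ_B(∅)} has a least element under inclusion (i.e. auth(T) is defined) and this least element is finite. In particular, if T is finite then auth(T) is defined and finite. -/
/-- A transaction deducibility function `Λ`, mapping a set of actors and a set of
transactions to the set of transactions they can deduce, satisfying the axioms of
Definition "Transaction deducibility axioms". -/
structure Deducibility (Ac Tx : Type*) where
  L : Set Ac → Set Tx → Set Tx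
  extensive : ∀ (A : Set Ac) (T : Set Tx), T ⊆ L A T
  idem : ∀ (A : Set Ac) (T : Set Tx), L A (L A T) = L A T
  mono : ∀ ⦃A A' : Set Ac⦄ ⦃T T' : Set Tx⦄, A ⊆ A' → T ⊆ T' → L A T ⊆ L A' T'
  cont : ∀ (A : Set Ac) (Ti : ℕ → Set Tx), Monotone Ti →
    L A (⋃ i, Ti i) = ⋃ i, L A (Ti i)
  finCauses : ∀ T : Set Tx, T.Finite → ∃ A : Set Ac, A.Finite ∧ T ⊆ L A ∅
  privKnow : ∀ A A' : Set Ac, L A ∅ ⊆ L A' ∅ → A ⊆ A'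
  noShared : ∀ (A B : Set Ac) (T : Set Tx), L A T ∩ L B T ⊆ L (A ∩ B) T

/-- if `T ⊆ Λ_A(∅)` for some finite `A`, then the family
`{B : T ⊆ Λ_B(∅)}` has a `⊆`-least element (i.e. `auth(T)` is defined), and this least
element is finite.  In particular, if `T` is finite then `auth(T)` is defined and finite. -/
theorem auth_defined_and_finite
    {Ac Tx : Type*} (D : Deducibility Ac Tx) :
    (∀ T : Set Tx, (∃ A : Set Ac, A.Finite ∧ T ⊆ D.L A ∅) →
      ∃ A₀ : Set Ac, IsLeast {B : Set Ac | T ⊆ D.L B ∅} A₀ ∧ A₀.Finite) ∧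
    (∀ T : Set Tx, T.Finite →
      ∃ A₀ : Set Ac, IsLeast {B : Set Ac | T ⊆ D.L B ∅} A₀ ∧ A₀.Finite) := by
  classical
  have main : ∀ T : Set Tx, (∃ A : Set Ac, A.Finite ∧ T ⊆ D.L A ∅) →
      ∃ A₀ : Set Ac, IsLeast {B : Set Ac | T ⊆ D.L B ∅} A₀ ∧ A₀.Finite := by
    intro T ⟨A, hAfin, hAT⟩
    -- minimise cardinality among finite witnesses
    have hne : ∃ n, ∃ A : Set Ac, A.Finite ∧ A.ncard = n ∧ T ⊆ D.L A ∅ :=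
      ⟨A.ncard, A, hAfin, rfl, hAT⟩
    obtain ⟨n, ⟨A₀, hA₀fin, hcard, hT⟩, hmin⟩ :=
      Nat.lt_wfRel.wf.has_min {n | ∃ A : Set Ac, A.Finite ∧ A.ncard = n ∧ T ⊆ D.L A ∅}
        (by obtain ⟨n, h⟩ := hne; exact ⟨n, h⟩)
    refine ⟨A₀, ⟨hT, ?_⟩, hA₀fin⟩
    intro B hB
    -- A₀ ∩ B also works
    have hIB : T ⊆ D.L (A₀ ∩ B) ∅ := fun t ht =>
      D.noShared A₀ B ∅ ⟨hT ht, hB ht⟩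
    have hIfin : (A₀ ∩ B).Finite := hA₀fin.inter_of_left B
    have hsub : A₀ ∩ B ⊆ A₀ := Set.inter_subset_left
    have hle : (A₀ ∩ B).ncard ≤ A₀.ncard := Set.ncard_le_ncard hsub hA₀fin
    have heq : (A₀ ∩ B).ncard = n := by
      by_contra hne'
      have hlt : (A₀ ∩ B).ncard < n := lt_of_le_of_ne (hcard ▸ hle) hne'
      exact hmin _ ⟨A₀ ∩ B, hIfin, rfl, hIB⟩ hlt
    have : A₀ ∩ B = A₀ :=
      Set.eq_of_subset_of_ncard_le hsub (by rw [heq, hcard]) hA₀fin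
    intro a ha
    have ha' : a ∈ A₀ ∩ B := by rw [this]; exact ha
    exact ha'.2
  exact ⟨main, fun T hT => main T (D.finCauses T hT)⟩
end

section
/- For an ω-bounded contract, for every set of actors A, every mempool P ⊆ Tx and every reachable state s, MEV_A(s, P) = max{γ̂_A(s, X) : X a finite sequence over Λ_A(P)} is defined and nonnegative. -/
/-- An abstract contract over actors `Ac`, token types `Tk`, transactions `Tx` and
contract states `Γ`.  A blockchain state is a pair of a contract state and a wallet
state `Ac → Tk → ℕ`.  Wallet states of initial states, and of any state produced by the
transition function, satisfy the finite tokens axiom (finitely many nonzero entries,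
i.e. finite total sum of naturals). -/
structure Contract (Ac Tk Tx Γ : Type*) where
  /-- The partial labelled transition function. -/
  step : Γ × (Ac → Tk → ℕ) → Tx → Option (Γ × (Ac → Tk → ℕ))
  /-- The set of initial blockchain states. -/
  init : Set (Γ × (Ac → Tk → ℕ))
  initFin : ∀ s ∈ init, (Function.support fun p : Ac × Tk => s.2 p.1 p.2).Finite
  stepFin : ∀ s tx s', step s tx = some s' →
    (Function.support fun p : Ac × Tk => s'.2 p.1 p.2).Finite

namespace Contract

variable {Ac Tk Tx Γ : Type*}

/-- The induced total execution relation: process the transactions in order, applying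
the partial transition function when defined (valid transaction) and leaving the state
unchanged otherwise. -/
def exec (C : Contract Ac Tk Tx Γ) :
    Γ × (Ac → Tk → ℕ) → List Tx → Γ × (Ac → Tk → ℕ)
  | s, [] => s
  | s, tx :: X => C.exec ((C.step s tx).getD s) X

/-- A state is reachable if some initial state reaches it by some sequence. -/
def Reachable (C : Contract Ac Tk Tx Γ) (s : Γ × (Ac → Tk → ℕ)) : Prop :=
  ∃ s₀ ∈ C.init, ∃ X : List Tx, C.exec s₀ X = s

end Contract

/-- The combined wallet of a set of actors `A` in a blockchain state `s`. -/
noncomputable def wal {Ac Tk Γ : Type*} (s : Γ × (Ac → Tk → ℕ)) (A : Set Ac) : Tk → ℕ :=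
  fun t => ∑ᶠ a ∈ A, s.2 a t

/-- `ω` is a wealth function: additive on finite-support wallets. -/
def IsWealth {Tk : Type*} (ω : (Tk → ℕ) → ℕ) : Prop :=
  ∀ w₀ w₁ : Tk → ℕ, (Function.support w₀).Finite → (Function.support w₁).Finite →
    ω (w₀ + w₁) = ω w₀ + ω w₁

/-- The gain `γ_A(s, X)` of actors `A` upon performing the sequence `X` from `s`. -/
noncomputable def Contract.gain {Ac Tk Tx Γ : Type*} (C : Contract Ac Tk Tx Γ) (ω : (Tk → ℕ) → ℕ)
    (A : Set Ac) (s : Γ × (Ac → Tk → ℕ)) (X : List Tx) : ℤ :=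
  (ω (wal (C.exec s X) A) : ℤ) - (ω (wal s A) : ℤ)

/-- ω-boundedness: the total wealth of all states reachable from an initial state is
bounded by a constant depending only on that initial state. -/
def Contract.Bounded {Ac Tk Tx Γ : Type*} (C : Contract Ac Tk Tx Γ)
    (ω : (Tk → ℕ) → ℕ) : Prop :=
  ∀ s₀ ∈ C.init, ∃ n : ℕ, ∀ X : List Tx, ω (wal (C.exec s₀ X) Set.univ) < n

/-- `X` is a finite sequence over the set `K` of transactions. -/
def SeqOver {Tx : Type*} (K : Set Tx) (X : List Tx) : Prop := ∀ tx ∈ X, tx ∈ K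

/-- The set of gains obtainable by `A` in `s` by firing sequences deducible from their
private knowledge only; the unrealized gain `u_A(s)` is its greatest element. -/
def ugainSet {Ac Tk Tx Γ : Type*} (C : Contract Ac Tk Tx Γ) (ω : (Tk → ℕ) → ℕ)
    (D : Deducibility Ac Tx) (A : Set Ac) (s : Γ × (Ac → Tk → ℕ)) : Set ℤ :=
  {g : ℤ | ∃ X : List Tx, SeqOver (D.L A ∅) X ∧ g = C.gain ω A s X}

/-- The set of external gains obtainable by `A` in `(s, P)` (`u` being the unrealized
gain `u_A(s)`); `MEV_A(s, P)` is its greatest element. -/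
def mevSet {Ac Tk Tx Γ : Type*} (C : Contract Ac Tk Tx Γ) (ω : (Tk → ℕ) → ℕ)
    (D : Deducibility Ac Tx) (A : Set Ac) (s : Γ × (Ac → Tk → ℕ)) (P : Set Tx)
    (u : ℤ) : Set ℤ :=
  {g : ℤ | ∃ X : List Tx, SeqOver (D.L A P) X ∧ g = C.gain ω A s X - u}

section Aux

variable {Ac Tk Tx Γ : Type*}

lemma exec_append' (C : Contract Ac Tk Tx Γ) (s : Γ × (Ac → Tk → ℕ)) (X Y : List Tx) :
    C.exec s (X ++ Y) = C.exec (C.exec s X) Y := by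
  induction X generalizing s with
  | nil => rfl
  | cons tx X ih => simp only [List.cons_append, Contract.exec]; exact ih _

lemma exec_fin' (C : Contract Ac Tk Tx Γ) (s : Γ × (Ac → Tk → ℕ)) (X : List Tx)
    (h : (Function.support fun p : Ac × Tk => s.2 p.1 p.2).Finite) :
    (Function.support fun p : Ac × Tk => (C.exec s X).2 p.1 p.2).Finite := by
  induction X generalizing s with
  | nil => exact h
  | cons tx X ih =>
    simp only [Contract.exec]
    cases hst : C.step s tx with
    | none => simpa [hst] using ih s h
    | some s' => simpa [hst] using ih s' (C.stepFin s tx s' hst)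

lemma wal_fin' {s : Γ × (Ac → Tk → ℕ)}
    (h : (Function.support fun p : Ac × Tk => s.2 p.1 p.2).Finite) (A : Set Ac) :
    (Function.support (wal s A)).Finite := by
  apply (h.image Prod.snd).subset
  intro t ht
  simp only [Function.mem_support, wal] at ht
  by_contra hmem
  apply ht
  have hz : ∀ a, s.2 a t = 0 := by
    intro a
    by_contra ha
    exact hmem ⟨(a, t), ha, rfl⟩
  simp [hz]

lemma wal_univ_eq' {s : Γ × (Ac → Tk → ℕ)}
    (h : (Function.support fun p : Ac × Tk => s.2 p.1 p.2).Finite) (A : Set Ac) :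
    wal s Set.univ = wal s A + wal s Aᶜ := by
  funext t
  have hf : (Function.support fun a => s.2 a t).Finite := by
    apply (h.image Prod.fst).subset
    intro a ha
    exact ⟨(a, t), ha, rfl⟩
  simp only [wal, Pi.add_apply]
  rw [← Set.union_compl_self A]
  exact finsum_mem_union' disjoint_compl_right (hf.inter_of_right A) (hf.inter_of_right Aᶜ)

lemma gain_le' (C : Contract Ac Tk Tx Γ) (ω : (Tk → ℕ) → ℕ) (hω : IsWealth ω)
    (hb : C.Bounded ω) (A : Set Ac) (s : Γ × (Ac → Tk → ℕ)) (hs : C.Reachable s) :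
    ∃ b : ℤ, ∀ X : List Tx, C.gain ω A s X ≤ b := by
  obtain ⟨s₀, hs₀, X₀, hX₀⟩ := hs
  obtain ⟨n, hn⟩ := hb s₀ hs₀
  refine ⟨(n : ℤ) - ω (wal s A), fun X => ?_⟩
  have hfin : (Function.support fun p : Ac × Tk => (C.exec s X).2 p.1 p.2).Finite := by
    rw [← hX₀, ← exec_append']
    exact exec_fin' C s₀ _ (C.initFin s₀ hs₀)
  have h1 : ω (wal (C.exec s X) A) ≤ ω (wal (C.exec s X) Set.univ) := by
    rw [wal_univ_eq' hfin A, hω _ _ (wal_fin' hfin A) (wal_fin' hfin Aᶜ)]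
    exact Nat.le_add_right _ _
  have h2 : ω (wal (C.exec s X) Set.univ) < n := by
    have := hn (X₀ ++ X)
    rwa [exec_append', hX₀] at this
  have : (ω (wal (C.exec s X) A) : ℤ) ≤ (n : ℤ) := by exact_mod_cast (h1.trans_lt h2).le
  simp only [Contract.gain]
  omega

end Aux

/-- for an ω-bounded contract, `MEV_A(s, P)` (the greatest element of the
set of external gains over sequences deducible from `Λ_A(P)`) is defined and
nonnegative, for every set of actors `A`, mempool `P` and reachable state `s`. -/
theorem mev_defined_nonneg
    {Ac Tk Tx Γ : Type*} [Countable Ac] [Infinite Ac]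
    (C : Contract Ac Tk Tx Γ) (ω : (Tk → ℕ) → ℕ) (hω : IsWealth ω)
    (hb : C.Bounded ω) (D : Deducibility Ac Tx)
    (A : Set Ac) (P : Set Tx) (s : Γ × (Ac → Tk → ℕ)) (hs : C.Reachable s)
    (u : ℤ) (hu : IsGreatest (ugainSet C ω D A s) u) :
    ∃ m : ℤ, IsGreatest (mevSet C ω D A s P u) m ∧ 0 ≤ m := by
  have hzero : (0 : ℤ) ∈ mevSet C ω D A s P u := by
    obtain ⟨Xu, hXu, hgu⟩ := hu.1
    refine ⟨Xu, fun tx htx => D.mono (le_refl A) (Set.empty_subset P) (hXu tx htx), by omega⟩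
  obtain ⟨b, hbnd⟩ := gain_le' C ω hω hb A s hs
  have Hbdd : ∃ b' : ℤ, ∀ z : ℤ, z ∈ mevSet C ω D A s P u → z ≤ b' := by
    refine ⟨b - u, fun z hz => ?_⟩
    obtain ⟨X, _, rfl⟩ := hz
    have := hbnd X
    omega
  obtain ⟨m, hm, hmax⟩ := Int.exists_greatest_of_bdd Hbdd ⟨0, hzero⟩
  exact ⟨m, ⟨hm, fun z hz => hmax z hz⟩, hmax 0 hzero⟩
end

section
/- For an ω-bounded contract, if the transaction authoriser auth(P) is defined and auth(P) ⊆ A, then MEV_A(s, P) = 0 for every reachable state s. -/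
/-- for an ω-bounded contract, if the transaction authoriser `auth(P)`
(the `⊆`-least set `B` with `P ⊆ Λ_B(∅)`) is defined and contained in `A`, then
`MEV_A(s, P) = 0` for every reachable state `s`. -/
theorem mev_zero_of_auth_subset
    {Ac Tk Tx Γ : Type*} [Countable Ac] [Infinite Ac]
    (C : Contract Ac Tk Tx Γ) (ω : (Tk → ℕ) → ℕ) (hω : IsWealth ω)
    (hb : C.Bounded ω) (D : Deducibility Ac Tx)
    (A Au : Set Ac) (P : Set Tx)
    (hauth : IsLeast {B : Set Ac | P ⊆ D.L B ∅} Au) (hAu : Au ⊆ A) :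
    ∀ s : Γ × (Ac → Tk → ℕ), C.Reachable s → ∀ u m : ℤ,
      IsGreatest (ugainSet C ω D A s) u →
      IsGreatest (mevSet C ω D A s P u) m → m = 0 := by
  intro s _ u m hu hm
  have hPA : P ⊆ D.L A ∅ := hauth.1.trans (D.mono hAu (subset_refl _))
  have hLAP : D.L A P ⊆ D.L A ∅ := by
    have := D.mono (subset_refl A) hPA
    rw [D.idem] at this; exact this
  -- m ≤ 0
  obtain ⟨X, hX, hmx⟩ := hm.1
  have hgle : C.gain ω A s X ≤ u := hu.2 ⟨X, fun tx h => hLAP (hX tx h), rfl⟩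
  have hm0 : m ≤ 0 := by omega
  -- 0 ≤ m
  obtain ⟨Y, hY, huY⟩ := hu.1
  have h0 : (0 : ℤ) ∈ mevSet C ω D A s P u :=
    ⟨Y, fun tx h => D.mono (subset_refl A) (Set.empty_subset P) (hY tx h), by omega⟩
  have := hm.2 h0
  omega
end

section
/- For an ω-bounded contract, for every set of actors A, mempool P and reachable state s: MEV_A(s, P) = MEV_A(s, P \ Λ_A(∅)). -/
/-- for an ω-bounded contract,
`MEV_A(s, P) = MEV_A(s, P \ Λ_A(∅))` for every set of actors `A`, mempool `P` and
reachable state `s`. -/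
theorem mev_cut_private
    {Ac Tk Tx Γ : Type*} [Countable Ac] [Infinite Ac]
    (C : Contract Ac Tk Tx Γ) (ω : (Tk → ℕ) → ℕ) (hω : IsWealth ω)
    (hb : C.Bounded ω) (D : Deducibility Ac Tx)
    (A : Set Ac) (P : Set Tx) (s : Γ × (Ac → Tk → ℕ)) (hs : C.Reachable s)
    (u m m' : ℤ)
    (hu : IsGreatest (ugainSet C ω D A s) u)
    (hm : IsGreatest (mevSet C ω D A s P u) m)
    (hm' : IsGreatest (mevSet C ω D A s (P \ D.L A ∅) u) m') :
    m = m' := by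
  have hL : D.L A (P \ D.L A ∅) = D.L A P := by
    apply Set.Subset.antisymm
    · exact D.mono (le_refl A) (Set.diff_subset)
    · have hP : P ⊆ D.L A (P \ D.L A ∅) := by
        intro t ht
        by_cases h : t ∈ D.L A ∅
        · exact D.mono (le_refl A) (Set.empty_subset _) h
        · exact D.extensive A _ ⟨ht, h⟩
      calc D.L A P ⊆ D.L A (D.L A (P \ D.L A ∅)) := D.mono (le_refl A) hP
        _ = D.L A (P \ D.L A ∅) := D.idem A _
  have : mevSet C ω D A s P u = mevSet C ω D A s (P \ D.L A ∅) u := by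
    unfold mevSet; rw [hL]
  rw [this] at hm
  exact le_antisymm (hm'.2 hm.1) (hm.2 hm'.1)
end

section
/- For an ω-bounded contract, if P ⊆ P' are mempools, then MEV_A(s, P) ≤ MEV_A(s, P') for every set of actors A and every reachable state s. -/
/-- for an ω-bounded contract, if `P ⊆ P'` then
`MEV_A(s, P) ≤ MEV_A(s, P')` for every set of actors `A` and reachable state `s`. -/
theorem mev_monotone_mempool
    {Ac Tk Tx Γ : Type*} [Countable Ac] [Infinite Ac]
    (C : Contract Ac Tk Tx Γ) (ω : (Tk → ℕ) → ℕ) (hω : IsWealth ω)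
    (hb : C.Bounded ω) (D : Deducibility Ac Tx)
    (A : Set Ac) (P P' : Set Tx) (hPP' : P ⊆ P')
    (s : Γ × (Ac → Tk → ℕ)) (hs : C.Reachable s)
    (u m m' : ℤ)
    (hu : IsGreatest (ugainSet C ω D A s) u)
    (hm : IsGreatest (mevSet C ω D A s P u) m)
    (hm' : IsGreatest (mevSet C ω D A s P' u) m') :
    m ≤ m' := by
  apply hm'.2
  obtain ⟨X, hX, hg⟩ := hm.1
  exact ⟨X, fun tx htx => D.mono (subset_refl A) hPP' (hX tx htx), hg⟩
end

section
/- For an ω-bounded contract, for every (possibly infinite) set of actors A, every mempool P and every reachable state s, there exists a finite subset A₀ ⊆ A such that for every B with A₀ ⊆ B ⊆ A one has MEV_{A₀}(s, P) = MEV_B(s, P). -/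
/-!
Since the contract is ω-bounded, the gains of any set of actors from a reachable state are
bounded, so the best gain of `A` over a knowledge set is attained by a finite sequence `W`.
Only finitely many actors of `A` matter for `W`: those holding tokens before or after `W`, and
a finite set of actors that deduce `W` from private knowledge alone (finite causes). Any `B`
between these and `A` can still deduce `W` (no shared secrets) and gains exactly as much from
it, while it can never gain more than `A`, since the actors of `A \ B` start with empty
wallets. Applied to both the unrealized gain and the gain over the mempool, this shows that
`MEV_B(s, P)` does not depend on `B`.
-/

open Function Set

section Wallets

variable {Ac Tk Γ : Type*}

def HasFiniteWallets (s : Γ × (Ac → Tk → ℕ)) : Prop :=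
  (support fun p : Ac × Tk => s.2 p.1 p.2).Finite

def holders (s : Γ × (Ac → Tk → ℕ)) : Set Ac := {a | s.2 a ≠ 0}

variable {s : Γ × (Ac → Tk → ℕ)}

theorem HasFiniteWallets.finite_support_apply (hs : HasFiniteWallets s) (t : Tk) :
    (support fun a => s.2 a t).Finite :=
  (hs.image Prod.fst).subset fun a ha => ⟨(a, t), ha, rfl⟩

theorem HasFiniteWallets.finite_holders (hs : HasFiniteWallets s) : (holders s).Finite :=
  (hs.image Prod.fst).subset fun a ha => by
    obtain ⟨t, ht⟩ := Function.ne_iff.mp ha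
    exact ⟨(a, t), ht, rfl⟩

theorem HasFiniteWallets.finite_support_wal (hs : HasFiniteWallets s) (S : Set Ac) :
    (support (wal s S)).Finite :=
  (hs.image Prod.snd).subset fun t ht => by
    obtain ⟨a, -, ha⟩ : ∃ a ∈ S, s.2 a t ≠ 0 := by
      by_contra! h
      exact ht (finsum_mem_of_eqOn_zero h)
    exact ⟨(a, t), ha, rfl⟩

theorem HasFiniteWallets.wal_add_wal_sdiff (hs : HasFiniteWallets s) {S T : Set Ac}
    (hST : S ⊆ T) : wal s S + wal s (T \ S) = wal s T :=
  funext fun t => finsum_mem_add_sdiff' hST ((hs.finite_support_apply t).inter_of_right T)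

theorem IsWealth.wal_mono {ω : (Tk → ℕ) → ℕ} (hω : IsWealth ω) (hs : HasFiniteWallets s)
    {S T : Set Ac} (hST : S ⊆ T) : ω (wal s S) ≤ ω (wal s T) := by
  rw [← hs.wal_add_wal_sdiff hST, hω _ _ (hs.finite_support_wal S) (hs.finite_support_wal _)]
  exact Nat.le_add_right _ _

theorem wal_eq_of_subset {A B : Set Ac} (hBA : B ⊆ A) (hA : A ∩ holders s ⊆ B) :
    wal s B = wal s A :=
  funext fun t => finsum_mem_inter_support_eq _ _ _ <|
    Subset.antisymm (inter_subset_inter_left _ hBA) fun _ ⟨haA, ha⟩ =>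
      ⟨hA ⟨haA, fun h => ha (congrFun h t)⟩, ha⟩

end Wallets

namespace Contract

variable {Ac Tk Tx Γ : Type*} (C : Contract Ac Tk Tx Γ)

theorem exec_append (s : Γ × (Ac → Tk → ℕ)) (X Y : List Tx) :
    C.exec s (X ++ Y) = C.exec (C.exec s X) Y := by
  induction X generalizing s with
  | nil => rfl
  | cons tx X ih => exact ih _

theorem hasFiniteWallets_exec {s : Γ × (Ac → Tk → ℕ)} (hs : HasFiniteWallets s)
    (X : List Tx) : HasFiniteWallets (C.exec s X) := by
  induction X generalizing s with
  | nil => exact hs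
  | cons tx X ih =>
    cases h : C.step s tx with
    | none => simpa [exec, h] using ih hs
    | some s' => simpa [exec, h] using ih (C.stepFin s tx s' h)

variable {C}

theorem Reachable.hasFiniteWallets {s : Γ × (Ac → Tk → ℕ)} (hs : C.Reachable s) :
    HasFiniteWallets s := by
  obtain ⟨s₀, h₀, X, rfl⟩ := hs
  exact C.hasFiniteWallets_exec (C.initFin s₀ h₀) X

theorem Reachable.exec {s : Γ × (Ac → Tk → ℕ)} (hs : C.Reachable s) (X : List Tx) :
    C.Reachable (C.exec s X) := by
  obtain ⟨s₀, h₀, X₀, rfl⟩ := hs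
  exact ⟨s₀, h₀, X₀ ++ X, C.exec_append s₀ X₀ X⟩

variable {ω : (Tk → ℕ) → ℕ} {s : Γ × (Ac → Tk → ℕ)} {A B : Set Ac}

theorem gain_le_gain_of_subset (hω : IsWealth ω) (hs : HasFiniteWallets s) (hBA : B ⊆ A)
    (hA : A ∩ holders s ⊆ B) (X : List Tx) : C.gain ω B s X ≤ C.gain ω A s X := by
  unfold gain
  rw [wal_eq_of_subset hBA hA]
  have := hω.wal_mono (C.hasFiniteWallets_exec hs X) hBA
  omega

theorem gain_eq_gain_of_subset (hBA : B ⊆ A) (hA : A ∩ holders s ⊆ B) {X : List Tx}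
    (hAX : A ∩ holders (C.exec s X) ⊆ B) : C.gain ω B s X = C.gain ω A s X := by
  rw [gain, gain, wal_eq_of_subset hBA hA, wal_eq_of_subset hBA hAX]

end Contract

theorem Deducibility.inter_L_empty_subset {Ac Tx : Type*} (D : Deducibility Ac Tx)
    {A A' B : Set Ac} {T : Set Tx} (h : A' ∩ A ⊆ B) : D.L A' ∅ ∩ D.L A T ⊆ D.L B T :=
  fun _ ⟨h₀, hT⟩ =>
    D.mono h le_rfl (D.noShared A' A T ⟨D.mono le_rfl (empty_subset T) h₀, hT⟩)

section GainSet

variable {Ac Tk Tx Γ : Type*} {C : Contract Ac Tk Tx Γ} {ω : (Tk → ℕ) → ℕ}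
  {s : Γ × (Ac → Tk → ℕ)} {A B : Set Ac}

/-- `ugainSet C ω D A s` is `gainSet C ω (D.L A ∅) A s` by definition, and `mevSet` is a
translate of `gainSet C ω (D.L A P) A s`. -/
def gainSet (C : Contract Ac Tk Tx Γ) (ω : (Tk → ℕ) → ℕ) (K : Set Tx) (B : Set Ac)
    (s : Γ × (Ac → Tk → ℕ)) : Set ℤ :=
  {g : ℤ | ∃ X : List Tx, SeqOver K X ∧ g = C.gain ω B s X}

theorem Contract.Bounded.bddAbove_gainSet (hb : C.Bounded ω) (hω : IsWealth ω)
    (hs : C.Reachable s) (K : Set Tx) (B : Set Ac) : BddAbove (gainSet C ω K B s) := by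
  have hfin (X : List Tx) := (hs.exec X).hasFiniteWallets
  obtain ⟨s₀, h₀, X₀, rfl⟩ := hs
  obtain ⟨n, hn⟩ := hb s₀ h₀
  refine ⟨n, ?_⟩
  rintro _ ⟨X, -, rfl⟩
  have hle := hω.wal_mono (hfin X) (subset_univ B)
  have hlt := hn (X₀ ++ X)
  rw [C.exec_append] at hlt
  unfold Contract.gain
  omega

theorem exists_isGreatest_gainSet {K : Set Tx} (hbdd : BddAbove (gainSet C ω K A s)) :
    ∃ W, SeqOver K W ∧ IsGreatest (gainSet C ω K A s) (C.gain ω A s W) := by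
  have hne : (gainSet C ω K A s).Nonempty :=
    ⟨_, [], fun _ h => absurd h List.not_mem_nil, rfl⟩
  obtain ⟨W, hW, hsup⟩ := Int.csSup_mem hne hbdd
  exact ⟨W, hW, hsup ▸ ⟨Int.csSup_mem hne hbdd, fun _ hg => le_csSup hbdd hg⟩⟩

theorem isGreatest_gainSet_of_subset (D : Deducibility Ac Tx) (hω : IsWealth ω)
    (hs : HasFiniteWallets s) {T : Set Tx} {W : List Tx} {A' : Set Ac}
    (hW : SeqOver (D.L A T) W) (hmax : IsGreatest (gainSet C ω (D.L A T) A s) (C.gain ω A s W))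
    (hA' : SeqOver (D.L A' ∅) W) (hBA : B ⊆ A) (hA'B : A' ∩ A ⊆ B)
    (hA : A ∩ holders s ⊆ B) (hAW : A ∩ holders (C.exec s W) ⊆ B) :
    IsGreatest (gainSet C ω (D.L B T) B s) (C.gain ω A s W) := by
  refine ⟨⟨W, fun tx htx => D.inter_L_empty_subset hA'B ⟨hA' tx htx, hW tx htx⟩, ?_⟩, ?_⟩
  · exact (C.gain_eq_gain_of_subset hBA hA hAW).symm
  · rintro _ ⟨Z, hZ, rfl⟩
    exact (C.gain_le_gain_of_subset hω hs hBA hA Z).trans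
      (hmax.2 ⟨Z, fun tx htx => D.mono hBA le_rfl (hZ tx htx), rfl⟩)

theorem exists_finite_forall_isGreatest_gainSet (D : Deducibility Ac Tx) (hω : IsWealth ω)
    (hs : HasFiniteWallets s) {T : Set Tx} (hbdd : BddAbove (gainSet C ω (D.L A T) A s)) :
    ∃ g, ∃ F : Set Ac, F.Finite ∧
      ∀ B ⊆ A, A ∩ F ⊆ B → IsGreatest (gainSet C ω (D.L B T) B s) g := by
  obtain ⟨W, hW, hmax⟩ := exists_isGreatest_gainSet hbdd
  obtain ⟨A', hA'fin, hA'⟩ := D.finCauses {tx | tx ∈ W} W.finite_toSet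
  refine ⟨_, A' ∪ holders s ∪ holders (C.exec s W),
    (hA'fin.union hs.finite_holders).union (C.hasFiniteWallets_exec hs W).finite_holders,
    fun B hBA hF => isGreatest_gainSet_of_subset D hω hs hW hmax hA' hBA ?_ ?_ ?_⟩
  · exact fun _ ⟨h₁, h₂⟩ => hF ⟨h₂, .inl (.inl h₁)⟩
  · exact fun _ ⟨h₁, h₂⟩ => hF ⟨h₁, .inl (.inr h₂)⟩
  · exact fun _ ⟨h₁, h₂⟩ => hF ⟨h₁, .inr h₂⟩

theorem isGreatest_gainSet_of_isGreatest_mevSet {D : Deducibility Ac Tx} {P : Set Tx}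
    {u m : ℤ} (h : IsGreatest (mevSet C ω D A s P u) m) :
    IsGreatest (gainSet C ω (D.L A P) A s) (m + u) := by
  obtain ⟨⟨X, hX, rfl⟩, hm⟩ := h
  refine ⟨⟨X, hX, by ring⟩, ?_⟩
  rintro _ ⟨Y, hY, rfl⟩
  linarith [hm ⟨Y, hY, rfl⟩]

end GainSet

theorem mev_finite_actors_general
    {Ac Tk Tx Γ : Type*}
    (C : Contract Ac Tk Tx Γ) (ω : (Tk → ℕ) → ℕ) (hω : IsWealth ω)
    (hb : C.Bounded ω) (D : Deducibility Ac Tx)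
    (A : Set Ac) (P : Set Tx) (s : Γ × (Ac → Tk → ℕ)) (hs : C.Reachable s) :
    ∃ A₀ : Set Ac, A₀ ⊆ A ∧ A₀.Finite ∧
      ∀ B : Set Ac, A₀ ⊆ B → B ⊆ A → ∀ u₀ uB m₀ mB : ℤ,
        IsGreatest (ugainSet C ω D A₀ s) u₀ →
        IsGreatest (ugainSet C ω D B s) uB →
        IsGreatest (mevSet C ω D A₀ s P u₀) m₀ →
        IsGreatest (mevSet C ω D B s P uB) mB →
        m₀ = mB := by
  obtain ⟨u, F₁, hF₁, hu⟩ := exists_finite_forall_isGreatest_gainSet D hω hs.hasFiniteWallets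
    (hb.bddAbove_gainSet hω hs (D.L A ∅) A)
  obtain ⟨M, F₂, hF₂, hM⟩ := exists_finite_forall_isGreatest_gainSet D hω hs.hasFiniteWallets
    (hb.bddAbove_gainSet hω hs (D.L A P) A)
  have hA₀ : A ∩ (F₁ ∪ F₂) ⊆ A := inter_subset_left
  refine ⟨A ∩ (F₁ ∪ F₂), hA₀, (hF₁.union hF₂).inter_of_right A, ?_⟩
  intro B hA₀B hBA u₀ uB m₀ mB hu₀ huB hm₀ hmB
  have h₁ {B'} (h : A ∩ (F₁ ∪ F₂) ⊆ B') : A ∩ F₁ ⊆ B' :=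
    (inter_subset_inter_right A subset_union_left).trans h
  have h₂ {B'} (h : A ∩ (F₁ ∪ F₂) ⊆ B') : A ∩ F₂ ⊆ B' :=
    (inter_subset_inter_right A subset_union_right).trans h
  have hu₀ : u₀ = u := hu₀.unique (hu _ hA₀ (h₁ le_rfl))
  have huB : uB = u := huB.unique (hu B hBA (h₁ hA₀B))
  have hm₀ : m₀ + u₀ = M :=
    (isGreatest_gainSet_of_isGreatest_mevSet hm₀).unique (hM _ hA₀ (h₂ le_rfl))
  have hmB : mB + uB = M :=
    (isGreatest_gainSet_of_isGreatest_mevSet hmB).unique (hM B hBA (h₂ hA₀B))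
  omega

/-- for an ω-bounded contract, for every (possibly infinite) set of actors
`A`, mempool `P` and reachable state `s`, there is a finite subset `A₀ ⊆ A` such that
`MEV_{A₀}(s, P) = MEV_B(s, P)` for every `B` with `A₀ ⊆ B ⊆ A`. -/
theorem mev_finite_actors
    {Ac Tk Tx Γ : Type*} [Countable Ac] [Infinite Ac]
    (C : Contract Ac Tk Tx Γ) (ω : (Tk → ℕ) → ℕ) (hω : IsWealth ω)
    (hb : C.Bounded ω) (D : Deducibility Ac Tx)
    (A : Set Ac) (P : Set Tx) (s : Γ × (Ac → Tk → ℕ)) (hs : C.Reachable s) :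
    ∃ A₀ : Set Ac, A₀ ⊆ A ∧ A₀.Finite ∧
      ∀ B : Set Ac, A₀ ⊆ B → B ⊆ A → ∀ u₀ uB m₀ mB : ℤ,
        IsGreatest (ugainSet C ω D A₀ s) u₀ →
        IsGreatest (ugainSet C ω D B s) uB →
        IsGreatest (mevSet C ω D A₀ s P u₀) m₀ →
        IsGreatest (mevSet C ω D B s P uB) mB →
        m₀ = mB :=
  mev_finite_actors_general C ω hω hb D A P s hs
end

section
/- Assume the set Tx of transactions is countable. For an ω-bounded contract, for every set of actors A, every mempool P and every reachable state s, there exists a finite subset P₀ ⊆ P such that MEV_A(s, P₀) = MEV_A(s, P). -/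
/-!
An optimal sequence `X` over `Λ_A(P)` uses only finitely many transactions. Exhausting the
countable mempool `P` by an increasing chain of finite sets, continuity of `Λ` places all of
them in `Λ_A(P₀)` for a single finite `P₀ ⊆ P`. By monotonicity `X` is still optimal over
`Λ_A(P₀)`, so both maxima are attained by `X`. If no sequence is optimal over `Λ_A(P)`, then
`MEV_A(s, P)` does not exist.
-/

namespace Deducibility

variable {Ac Tx : Type*} (D : Deducibility Ac Tx)

theorem exists_finite_subset_of_finite_subset [Countable Tx] (A : Set Ac) {P F : Set Tx}
    (hF : F.Finite) (hFP : F ⊆ D.L A P) : ∃ P₀ ⊆ P, P₀.Finite ∧ F ⊆ D.L A P₀ := by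
  obtain ⟨e, he⟩ := Countable.exists_injective_nat Tx
  set T : ℕ → Set Tx := fun n => P ∩ e ⁻¹' Set.Iic n
  have hT : Monotone T := fun m n hmn =>
    Set.inter_subset_inter_right _ (Set.preimage_mono (Set.Iic_subset_Iic.2 hmn))
  have hP : ⋃ n, T n = P := by
    rw [← Set.inter_iUnion, ← Set.preimage_iUnion, Set.iUnion_Iic, Set.preimage_univ,
      Set.inter_univ]
  rw [← hP, D.cont A T hT, ← hF.coe_toFinset] at hFP
  have hLT : Monotone fun n => D.L A (T n) := fun m n hmn => D.mono subset_rfl (hT hmn)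
  obtain ⟨n, hn⟩ := hLT.directed_le.exists_mem_subset_of_finset_subset_biUnion hFP
  exact ⟨T n, Set.inter_subset_left,
    ((Set.finite_Iic n).preimage he.injOn).subset Set.inter_subset_right, hF.coe_toFinset ▸ hn⟩

theorem exists_finite_subset_seqOver [Countable Tx] {A : Set Ac} {P : Set Tx} {X : List Tx}
    (hX : SeqOver (D.L A P) X) : ∃ P₀ ⊆ P, P₀.Finite ∧ SeqOver (D.L A P₀) X :=
  D.exists_finite_subset_of_finite_subset A X.finite_toSet hX

end Deducibility

section Optimal

variable {Ac Tk Tx Γ : Type*} (C : Contract Ac Tk Tx Γ) (ω : (Tk → ℕ) → ℕ)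
  (D : Deducibility Ac Tx) (A : Set Ac) (s : Γ × (Ac → Tk → ℕ))

def IsOptimalSeq (P : Set Tx) (X : List Tx) : Prop :=
  SeqOver (D.L A P) X ∧ ∀ Y, SeqOver (D.L A P) Y → C.gain ω A s Y ≤ C.gain ω A s X

variable {C ω D A s}

theorem IsOptimalSeq.isGreatest_mevSet {P : Set Tx} {X : List Tx}
    (hX : IsOptimalSeq C ω D A s P X) (u : ℤ) :
    IsGreatest (mevSet C ω D A s P u) (C.gain ω A s X - u) := by
  refine ⟨⟨X, hX.1, rfl⟩, ?_⟩
  rintro _ ⟨Y, hY, rfl⟩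
  exact Int.sub_le_sub_right (hX.2 Y hY) u

theorem IsOptimalSeq.of_subset {P₀ P : Set Tx} {X : List Tx} (hX : IsOptimalSeq C ω D A s P X)
    (hP₀ : P₀ ⊆ P) (hX₀ : SeqOver (D.L A P₀) X) : IsOptimalSeq C ω D A s P₀ X :=
  ⟨hX₀, fun Y hY => hX.2 Y fun tx htx => D.mono subset_rfl hP₀ (hY tx htx)⟩

theorem exists_isOptimalSeq_of_isGreatest_mevSet {P : Set Tx} {u m : ℤ}
    (h : IsGreatest (mevSet C ω D A s P u) m) : ∃ X, IsOptimalSeq C ω D A s P X := by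
  obtain ⟨⟨X, hX, rfl⟩, hmax⟩ := h
  exact ⟨X, hX, fun Y hY => Int.sub_le_sub_right_iff.1 (hmax ⟨Y, hY, rfl⟩)⟩

end Optimal

theorem mev_finite_mempool_general
    {Ac Tk Tx Γ : Type*} [Countable Tx]
    (C : Contract Ac Tk Tx Γ) (ω : (Tk → ℕ) → ℕ)
    (D : Deducibility Ac Tx)
    (A : Set Ac) (P : Set Tx) (s : Γ × (Ac → Tk → ℕ)) :
    ∃ P₀ : Set Tx, P₀ ⊆ P ∧ P₀.Finite ∧
      ∀ u m₀ m : ℤ,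
        IsGreatest (ugainSet C ω D A s) u →
        IsGreatest (mevSet C ω D A s P₀ u) m₀ →
        IsGreatest (mevSet C ω D A s P u) m →
        m₀ = m := by
  by_cases hopt : ∃ X, IsOptimalSeq C ω D A s P X
  · obtain ⟨X, hX⟩ := hopt
    obtain ⟨P₀, hP₀P, hP₀, hXP₀⟩ := D.exists_finite_subset_seqOver hX.1
    refine ⟨P₀, hP₀P, hP₀, fun u m₀ m _ hm₀ hm => ?_⟩
    rw [hm₀.unique ((hX.of_subset hP₀P hXP₀).isGreatest_mevSet u),
      hm.unique (hX.isGreatest_mevSet u)]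
  · exact ⟨∅, Set.empty_subset P, Set.finite_empty,
      fun u m₀ m _ _ hm => (hopt (exists_isOptimalSeq_of_isGreatest_mevSet hm)).elim⟩

/-- (with `Tx` countable) for an ω-bounded contract, for every set of
actors `A`, mempool `P` and reachable state `s`, there is a finite subset `P₀ ⊆ P`
such that `MEV_A(s, P₀) = MEV_A(s, P)`. -/
theorem mev_finite_mempool
    {Ac Tk Tx Γ : Type*} [Countable Ac] [Infinite Ac] [Countable Tx]
    (C : Contract Ac Tk Tx Γ) (ω : (Tk → ℕ) → ℕ) (hω : IsWealth ω)
    (hb : C.Bounded ω) (D : Deducibility Ac Tx)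
    (A : Set Ac) (P : Set Tx) (s : Γ × (Ac → Tk → ℕ)) (hs : C.Reachable s) :
    ∃ P₀ : Set Tx, P₀ ⊆ P ∧ P₀.Finite ∧
      ∀ u m₀ m : ℤ,
        IsGreatest (ugainSet C ω D A s) u →
        IsGreatest (mevSet C ω D A s P₀ u) m₀ →
        IsGreatest (mevSet C ω D A s P u) m →
        m₀ = m :=
  mev_finite_mempool_general C ω D A P s
end
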